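/- For ν ∈ ℝ fixed, K_ν(ω) ~ √(π/2) · e^{-ω} · ω^{-1/2} as ω → ∞, i.e., the ratio K_ν(ω)/(√(π/2) e^{-ω} ω^{-1/2}) tends to 1. -/

import Mathlib

/-!
Substituting `x = exp u` and then `u = s / √ω` gives
`K_ν(ω) = exp (-ω) / (2 √ω) * ∫ exp (ν s / √ω - ω (cosh (s / √ω) - 1)) ds`.
Since `s² / 2 ≤ ω (cosh (s / √ω) - 1) ≤ (s² / 2) exp (s² / (2ω))`, the new integrand tends
to the Gaussian `exp (-s² / 2)` and, for `ω ≥ 1`, is dominated by `exp (ν² - s² / 4)`;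
dominated convergence then gives `∫ ⋯ ds → √(2π)`.
-/

open MeasureTheory Real Set Filter

/-- Integral representation of the modified Bessel function of the third kind. -/
noncomputable def besselK (ν ω : ℝ) : ℝ :=
  (1/2) * ∫ x in Ioi (0:ℝ), x ^ (ν - 1) * Real.exp (-(ω/2) * (x + x⁻¹))

open Topology

namespace Real

lemma one_add_sq_div_two_le_cosh (t : ℝ) : 1 + t ^ 2 / 2 ≤ cosh t := by
  have h := sum_le_hasSum (Finset.range 2) (fun n _ => by rw [pow_mul]; positivity) (hasSum_cosh t)
  simpa [Finset.sum_range_succ] using h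

lemma exp_sub_one_le_mul_exp (x : ℝ) : exp x - 1 ≤ x * exp x := by
  have h := mul_le_mul_of_nonneg_right (one_sub_le_exp_neg x) (exp_pos x).le
  rw [← exp_add, neg_add_cancel, exp_zero] at h
  linarith

lemma cosh_sub_one_le (t : ℝ) : cosh t - 1 ≤ t ^ 2 / 2 * exp (t ^ 2 / 2) := by
  linarith [cosh_le_exp_half_sq t, exp_sub_one_le_mul_exp (t ^ 2 / 2)]

end Real

theorem integral_Ioi_rpow_mul_exp_add_inv (ν ω : ℝ) :
    ∫ x in Ioi (0:ℝ), x ^ (ν - 1) * exp (-(ω / 2) * (x + x⁻¹))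
      = ∫ u : ℝ, exp (ν * u - ω * cosh u) := by
  rw [← range_exp, ← image_univ,
    integral_image_eq_integral_abs_deriv_smul MeasurableSet.univ
      (fun u _ => (hasDerivAt_exp u).hasDerivWithinAt) exp_injective.injOn,
    setIntegral_univ]
  congr 1 with u
  rw [smul_eq_mul, abs_of_pos (exp_pos u), rpow_def_of_pos (exp_pos u), log_exp, ← exp_neg,
    ← exp_add, ← exp_add, cosh_eq]
  ring_nf

noncomputable def besselKScaledIntegrand (ν ω s : ℝ) : ℝ :=
  exp (ν * (s / √ω) - ω * (cosh (s / √ω) - 1))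

theorem besselK_eq_mul_integral_besselKScaledIntegrand {ν ω : ℝ} (hω : 0 < ω) :
    besselK ν ω = exp (-ω) / (2 * √ω) * ∫ s, besselKScaledIntegrand ν ω s := by
  have hsqrt : 0 < √ω := sqrt_pos.mpr hω
  have hscale : ∫ s, besselKScaledIntegrand ν ω s
      = √ω * ∫ u, exp ω * exp (ν * u - ω * cosh u) := by
    simp only [besselKScaledIntegrand]
    rw [Measure.integral_comp_div (fun u => exp (ν * u - ω * (cosh u - 1))), abs_of_pos hsqrt]
    congr 2 with u
    rw [← exp_add]
    ring_nf
  rw [besselK, integral_Ioi_rpow_mul_exp_add_inv, hscale, integral_const_mul, exp_neg]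
  field_simp

section Asymptotics

variable {ω : ℝ} (ν s : ℝ)

lemma sq_div_two_le_mul_cosh_div_sqrt_sub_one (hω : 0 < ω) :
    s ^ 2 / 2 ≤ ω * (cosh (s / √ω) - 1) := by
  calc s ^ 2 / 2 = ω * ((s / √ω) ^ 2 / 2) := by
        rw [div_pow, sq_sqrt hω.le]
        field_simp
    _ ≤ ω * (cosh (s / √ω) - 1) := by
        gcongr
        linarith [one_add_sq_div_two_le_cosh (s / √ω)]

lemma mul_cosh_div_sqrt_sub_one_le (hω : 0 < ω) :
    ω * (cosh (s / √ω) - 1) ≤ s ^ 2 / 2 * exp (s ^ 2 / (2 * ω)) := by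
  calc ω * (cosh (s / √ω) - 1)
      ≤ ω * ((s / √ω) ^ 2 / 2 * exp ((s / √ω) ^ 2 / 2)) := by
        gcongr
        exact cosh_sub_one_le _
    _ = s ^ 2 / 2 * exp (s ^ 2 / (2 * ω)) := by
        rw [div_pow, sq_sqrt hω.le, div_div, mul_comm ω 2]
        field_simp

lemma tendsto_mul_cosh_div_sqrt_sub_one :
    Tendsto (fun ω => ω * (cosh (s / √ω) - 1)) atTop (𝓝 (s ^ 2 / 2)) := by
  have hupper : Tendsto (fun ω => s ^ 2 / 2 * exp (s ^ 2 / (2 * ω))) atTop (𝓝 (s ^ 2 / 2)) := by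
    have h : Tendsto (fun ω : ℝ => s ^ 2 / (2 * ω)) atTop (𝓝 0) :=
      tendsto_const_nhds.div_atTop (tendsto_id.const_mul_atTop two_pos)
    simpa using ((continuous_exp.tendsto 0).comp h).const_mul (s ^ 2 / 2)
  refine tendsto_of_tendsto_of_tendsto_of_le_of_le' tendsto_const_nhds hupper ?_ ?_
  · filter_upwards [eventually_gt_atTop 0] with ω hω
    exact sq_div_two_le_mul_cosh_div_sqrt_sub_one s hω
  · filter_upwards [eventually_gt_atTop 0] with ω hω
    exact mul_cosh_div_sqrt_sub_one_le s hω

lemma besselKScaledIntegrand_le (hω : 1 ≤ ω) :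
    besselKScaledIntegrand ν ω s ≤ exp (ν ^ 2) * exp (-4⁻¹ * s ^ 2) := by
  have hsqrt : 1 ≤ √ω := one_le_sqrt.mpr hω
  have hdrift : ν * (s / √ω) ≤ |ν| * |s| :=
    calc ν * (s / √ω) ≤ |ν * (s / √ω)| := le_abs_self _
      _ = |ν| * (|s| / √ω) := by rw [abs_mul, abs_div, abs_of_pos (zero_lt_one.trans_le hsqrt)]
      _ ≤ |ν| * |s| := by
          gcongr
          exact div_le_self (abs_nonneg s) hsqrt
  have hcosh := sq_div_two_le_mul_cosh_div_sqrt_sub_one s (zero_lt_one.trans_le hω)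
  rw [besselKScaledIntegrand, ← exp_add, exp_le_exp]
  nlinarith [sq_nonneg (|ν| - |s| / 2), sq_abs ν, sq_abs s]

lemma tendsto_besselKScaledIntegrand :
    Tendsto (fun ω => besselKScaledIntegrand ν ω s) atTop (𝓝 (exp (-2⁻¹ * s ^ 2))) := by
  have hdrift : Tendsto (fun ω => ν * (s / √ω)) atTop (𝓝 0) := by
    simpa using (tendsto_const_nhds.div_atTop tendsto_sqrt_atTop).const_mul ν
  rw [show -2⁻¹ * s ^ 2 = 0 - s ^ 2 / 2 by ring]
  exact (continuous_exp.tendsto _).comp (hdrift.sub (tendsto_mul_cosh_div_sqrt_sub_one s))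

end Asymptotics

theorem tendsto_integral_besselKScaledIntegrand (ν : ℝ) :
    Tendsto (fun ω => ∫ s, besselKScaledIntegrand ν ω s) atTop (𝓝 √(2 * π)) := by
  have hgauss : ∫ s : ℝ, exp (-2⁻¹ * s ^ 2) = √(2 * π) := by
    rw [integral_gaussian, div_inv_eq_mul, mul_comm]
  rw [← hgauss]
  refine tendsto_integral_filter_of_dominated_convergence
    (fun s => exp (ν ^ 2) * exp (-4⁻¹ * s ^ 2))
    (Eventually.of_forall fun ω => ?_) ?_ ((integrable_exp_neg_mul_sq (by norm_num)).const_mul _)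
    (ae_of_all _ (tendsto_besselKScaledIntegrand ν))
  · unfold besselKScaledIntegrand
    fun_prop
  · filter_upwards [eventually_ge_atTop 1] with ω hω
    exact ae_of_all _ fun s =>
      (norm_of_nonneg (exp_pos _).le).trans_le (besselKScaledIntegrand_le ν s hω)

theorem besselK_asymptotic (ν : ℝ) :
    Tendsto (fun ω : ℝ =>
        besselK ν ω / (Real.sqrt (π / 2) * Real.exp (-ω) * ω ^ (-(1:ℝ)/2)))
      atTop (nhds 1) := by
  have hsqrt2π : √(2 * π) = 2 * √(π / 2) := by
    rw [show 2 * π = 2 ^ 2 * (π / 2) by ring, sqrt_mul (by positivity), sqrt_sq zero_le_two]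
  have hlim := (tendsto_integral_besselKScaledIntegrand ν).div_const √(2 * π)
  rw [div_self (by positivity)] at hlim
  refine hlim.congr' ?_
  filter_upwards [eventually_gt_atTop 0] with ω hω
  rw [besselK_eq_mul_integral_besselKScaledIntegrand hω, hsqrt2π, neg_div, rpow_neg hω.le,
    ← sqrt_eq_rpow]
  field_simp
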